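/- arXiv:1801.05376 — 2 statements merged into one kernel-verified Lean document; each statement's English description precedes it below -/
import Mathlib

section
/- Every (7/3)-power-free infinite binary word contains, as a factor, every factor of the Thue–Morse word t. In particular, this holds for every overlap-free infinite binary word. -/
/-- The factor of the infinite word `u` of length `m` starting at position `i`. -/
def factorAt {k : ℕ} (u : ℕ → Fin k) (i m : ℕ) : List (Fin k) :=
  (List.range m).map fun j => u (i + j)

/-- `v` is a factor of the infinite word `u`. -/
def IsFactor {k : ℕ} (v : List (Fin k)) (u : ℕ → Fin k) : Prop :=
  ∃ i, v = factorAt u i v.length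

/-- Subword complexity: the number of distinct factors of length `n`. -/
noncomputable def complexity {k : ℕ} (u : ℕ → Fin k) (n : ℕ) : ℕ :=
  Set.ncard {v : List (Fin k) | v.length = n ∧ IsFactor v u}

/-- The word `w` has period `q` (`1 ≤ q ≤ |w|`, and `w(i) = w(i+q)` whenever defined). -/
def HasPer {A : Type*} (w : List A) (q : ℕ) : Prop :=
  1 ≤ q ∧ q ≤ w.length ∧ ∀ i, i + q < w.length → w[i]? = w[i + q]?

/-- The minimal period of a finite word. -/
noncomputable def minPer {A : Type*} (w : List A) : ℕ := sInf {q | HasPer w q}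

/-- The exponent of a finite word: its length divided by its minimal period. -/
noncomputable def exponent {A : Type*} (w : List A) : ℝ := (w.length : ℝ) / (minPer w : ℝ)

/-- `u` is `α`-power-free: no nonempty factor has exponent `≥ α`. -/
def PowerFree {k : ℕ} (α : ℝ) (u : ℕ → Fin k) : Prop :=
  ∀ v : List (Fin k), v ≠ [] → IsFactor v u → exponent v < α

/-- `u` is `α⁺`-power-free: no nonempty factor has exponent `> α`. -/
def PowerFreePlus {k : ℕ} (α : ℝ) (u : ℕ → Fin k) : Prop :=
  ∀ v : List (Fin k), v ≠ [] → IsFactor v u → exponent v ≤ α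

/-- Overlap-free means `2⁺`-power-free. -/
def OverlapFree {k : ℕ} (u : ℕ → Fin k) : Prop := PowerFreePlus 2 u

/-- The Thue–Morse word: `t n` is the number of 1's, mod 2, in the binary expansion of `n`. -/
def thueMorse : ℕ → Fin 2 := fun n => Fin.ofNat 2 ((Nat.digits 2 n).count 1)

/-! A `7/3`-power-free binary word contains no cube `aaa`, no `ababa` and no factor of period 3
and length 7. Hence, past position 0, consecutive occurrences of `aa` or `bb` lie 2 or 4 apart,
so all of them start at positions of one parity. Cutting the word after position 0 or 1 into
blocks of length 2 therefore yields blocks `01` and `10` only, i.e. the word is `μ(v)` up to a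
prefix, and `v` is again `7/3`-power-free because `μ` doubles periods and lengths. Iterating,
every `μⁿ(0)`, which is the prefix of length `2ⁿ` of the Thue–Morse word, is a factor. -/

section Factors

variable {k : ℕ} (u : ℕ → Fin k)

@[simp]
lemma length_factorAt (i m : ℕ) : (factorAt u i m).length = m := by
  simp [factorAt]

lemma getElem?_factorAt {i m j : ℕ} (h : j < m) : (factorAt u i m)[j]? = some (u (i + j)) := by
  simp [factorAt, List.getElem?_range h]

lemma isFactor_factorAt (i m : ℕ) : IsFactor (factorAt u i m) u :=
  ⟨i, by rw [length_factorAt]⟩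

lemma factorAt_add (i m n : ℕ) :
    factorAt u i (m + n) = factorAt u i m ++ factorAt u (i + m) n := by
  simp only [factorAt, List.range_add, List.map_append, List.map_map, Function.comp_def,
    add_assoc]

lemma isFactor_factorAt_of_isFactor {w : ℕ → Fin k} {b N : ℕ}
    (h : IsFactor (factorAt w b N) u) {i L : ℕ} (hiL : i + L ≤ N) :
    IsFactor (factorAt w (b + i) L) u := by
  obtain ⟨a, ha⟩ := h
  rw [length_factorAt, show N = i + (L + (N - (i + L))) by omega, factorAt_add, factorAt_add,
    factorAt_add, factorAt_add] at ha
  have hL := (List.append_inj ha (by simp)).2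
  exact ⟨a + i, by rw [(List.append_inj hL (by simp)).1, length_factorAt]⟩

end Factors

section Exponent

variable {A : Type*} {w : List A} {q : ℕ}

lemma hasPer_length (h : w ≠ []) : HasPer w w.length :=
  ⟨List.length_pos_iff.mpr h, le_rfl, fun _ _ => by omega⟩

lemma hasPer_minPer (h : w ≠ []) : HasPer w (minPer w) :=
  Nat.sInf_mem (s := {q | HasPer w q}) ⟨w.length, hasPer_length h⟩

lemma HasPer.length_div_le_exponent (h : HasPer w q) : (w.length : ℝ) / q ≤ exponent w := by
  have hne : w ≠ [] := by
    rintro rfl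
    exact absurd (h.1.trans h.2.1) (by simp)
  have hmin : 1 ≤ minPer w := (hasPer_minPer hne).1
  exact div_le_div_of_nonneg_left (by positivity) (by exact_mod_cast hmin)
    (by exact_mod_cast Nat.sInf_le h)

end Exponent

section PowerFree

variable {k : ℕ} {u : ℕ → Fin k} {α : ℝ}

lemma PowerFree.length_div_lt (hu : PowerFree α u) {i q m : ℕ} (hq : 1 ≤ q) (hqm : q ≤ m)
    (hper : ∀ j, j + q < m → u (i + j) = u (i + j + q)) : (m : ℝ) / q < α := by
  have hP : HasPer (factorAt u i m) q := by
    refine ⟨hq, by simpa using hqm, fun j hj => ?_⟩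
    rw [length_factorAt] at hj
    rw [getElem?_factorAt u (by omega), getElem?_factorAt u hj, ← add_assoc, hper j hj]
  have hne : factorAt u i m ≠ [] := List.ne_nil_of_length_pos (by simp; omega)
  simpa using hP.length_div_le_exponent.trans_lt (hu _ hne (isFactor_factorAt u i m))

lemma PowerFreePlus.powerFree {β : ℝ} (hu : PowerFreePlus α u) (hαβ : α < β) :
    PowerFree β u :=
  fun v hv hf => (hu v hv hf).trans_lt hαβ

lemma PowerFree.isFactor_singleton {u : ℕ → Fin 2} (hu : PowerFree α u) (a : Fin 2) :
    IsFactor [a] u := by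
  by_contra hmiss
  have hconst : ∀ i, u i = 1 - a := fun i => by
    have : u i ≠ a := fun h => hmiss ⟨i, by simp [factorAt, h]⟩
    omega
  obtain ⟨m, hm⟩ := exists_nat_ge α
  have := hu.length_div_lt (i := 0) (q := 1) (m := m + 1) le_rfl (by omega)
    (fun j _ => by rw [hconst, hconst])
  push_cast at this
  linarith

end PowerFree

section Morphism

/-- The Thue–Morse morphism `μ : 0 ↦ 01, 1 ↦ 10`. -/
def thueMorseMorphism (z : List (Fin 2)) : List (Fin 2) := z.flatMap fun a => [a, 1 - a]

@[simp]
lemma thueMorseMorphism_nil : thueMorseMorphism [] = [] := rfl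

@[simp]
lemma thueMorseMorphism_cons (a : Fin 2) (z : List (Fin 2)) :
    thueMorseMorphism (a :: z) = a :: (1 - a) :: thueMorseMorphism z := rfl

@[simp]
lemma length_thueMorseMorphism (z : List (Fin 2)) :
    (thueMorseMorphism z).length = 2 * z.length := by
  induction z with
  | nil => rfl
  | cons a z ih => simp [ih]; omega

lemma thueMorseMorphism_ne_nil {z : List (Fin 2)} (hz : z ≠ []) : thueMorseMorphism z ≠ [] := by
  simpa [← List.length_pos_iff] using hz

lemma getElem?_thueMorseMorphism_two_mul (z : List (Fin 2)) (n : ℕ) :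
    (thueMorseMorphism z)[2 * n]? = z[n]? := by
  induction z generalizing n with
  | nil => rfl
  | cons a z ih => cases n <;> simp [Nat.mul_succ, ih]

lemma getElem?_thueMorseMorphism_two_mul_add_one (z : List (Fin 2)) (n : ℕ) :
    (thueMorseMorphism z)[2 * n + 1]? = z[n]?.map (1 - ·) := by
  induction z generalizing n with
  | nil => rfl
  | cons a z ih => cases n <;> simp [Nat.mul_succ, ih]

lemma HasPer.thueMorseMorphism {z : List (Fin 2)} {q : ℕ} (h : HasPer z q) :
    HasPer (thueMorseMorphism z) (2 * q) := by
  obtain ⟨hq, hqz, hper⟩ := h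
  refine ⟨by omega, by simpa using hqz, fun i hi => ?_⟩
  rw [length_thueMorseMorphism] at hi
  obtain ⟨n, rfl | rfl⟩ := Nat.even_or_odd' i
  · rw [← mul_add, getElem?_thueMorseMorphism_two_mul, getElem?_thueMorseMorphism_two_mul,
      hper n (by omega)]
  · rw [show 2 * n + 1 + 2 * q = 2 * (n + q) + 1 by ring,
      getElem?_thueMorseMorphism_two_mul_add_one, getElem?_thueMorseMorphism_two_mul_add_one,
      hper n (by omega)]

lemma exponent_le_exponent_thueMorseMorphism {z : List (Fin 2)} (hz : z ≠ []) :
    exponent z ≤ exponent (thueMorseMorphism z) := by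
  have hmin : (0 : ℝ) < minPer z := by exact_mod_cast (hasPer_minPer hz).1
  calc exponent z = (2 * z.length : ℝ) / (2 * minPer z) := by
        rw [mul_div_mul_left _ _ two_ne_zero, exponent]
    _ ≤ exponent (thueMorseMorphism z) := by
        simpa using (hasPer_minPer hz).thueMorseMorphism.length_div_le_exponent

lemma PowerFree.of_isFactor_thueMorseMorphism {α : ℝ} {u v : ℕ → Fin 2} (hu : PowerFree α u)
    (h : ∀ z, IsFactor z v → IsFactor (thueMorseMorphism z) u) : PowerFree α v :=
  fun z hz hf => (exponent_le_exponent_thueMorseMorphism hz).trans_lt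
    (hu _ (thueMorseMorphism_ne_nil hz) (h z hf))

lemma factorAt_eq_thueMorseMorphism {u : ℕ → Fin 2} {j : ℕ}
    (h : ∀ n, u (j + 2 * n + 1) = 1 - u (j + 2 * n)) (m L : ℕ) :
    factorAt u (j + 2 * m) (2 * L) =
      thueMorseMorphism (factorAt (fun n => u (j + 2 * n)) m L) := by
  induction L with
  | zero => rfl
  | succ L ih =>
    have hblock : factorAt u (j + 2 * (m + L)) 2 =
        [u (j + 2 * (m + L)), 1 - u (j + 2 * (m + L))] := by
      simp [factorAt, List.range_succ, h]
    rw [mul_add, mul_one, factorAt_add, factorAt_add, ih, add_assoc, ← mul_add, hblock]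
    simp [factorAt, thueMorseMorphism]

end Morphism

section SevenThirdsPowerFree

variable {u : ℕ → Fin 2} (hu : PowerFree (7 / 3) u)
include hu

lemma not_cube {c : ℕ} (h₀ : u c = u (c + 1)) (h₁ : u (c + 1) = u (c + 2)) : False := by
  have := hu.length_div_lt (i := c) (q := 1) (m := 3) le_rfl (by omega) fun j hj => by
    obtain rfl | rfl : j = 0 ∨ j = 1 := by omega
    exacts [h₀, h₁]
  norm_num at this

lemma exists_eq_succ_of_le_add_three (i : ℕ) : ∃ e, i ≤ e ∧ e ≤ i + 3 ∧ u e = u (e + 1) := by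
  by_contra! halt
  have := hu.length_div_lt (i := i) (q := 2) (m := 5) (by omega) (by omega) fun j hj => by
    have := halt i; have := halt (i + 1); have := halt (i + 2); have := halt (i + 3)
    obtain rfl | rfl | rfl : j = 0 ∨ j = 1 ∨ j = 2 := by omega
    all_goals simp only [add_assoc, Nat.reduceAdd, add_zero] at *; omega
  norm_num at this

/-- Past position 0, the next square of a letter after `u c = u (c + 1)` starts 2 or 4 positions
later: 1 would give a cube, 3 a factor `baabaab` of exponent `7/3`, and 5 or more an `ababa`. -/
lemma eq_succ_add_two_or_add_four {c : ℕ} (hc : 1 ≤ c) (h : u c = u (c + 1)) :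
    u (c + 2) = u (c + 3) ∨
      (u (c + 2) ≠ u (c + 3) ∧ u (c + 3) ≠ u (c + 4) ∧ u (c + 4) = u (c + 5)) := by
  obtain ⟨b, rfl⟩ : ∃ b, c = b + 1 := ⟨c - 1, by omega⟩
  have hl : u b ≠ u (b + 1) := fun h' => not_cube hu h' h
  have hr : u (b + 2) ≠ u (b + 3) := not_cube hu h
  by_cases h₂ : u (b + 3) = u (b + 4)
  · exact Or.inl h₂
  by_cases h₃ : u (b + 4) = u (b + 5)
  · have h₅ : u (b + 5) ≠ u (b + 6) := not_cube hu h₃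
    have := hu.length_div_lt (i := b) (q := 3) (m := 7) (by omega) (by omega) fun j hj => by
      obtain rfl | rfl | rfl | rfl : j = 0 ∨ j = 1 ∨ j = 2 ∨ j = 3 := by omega
      all_goals simp only [add_assoc, Nat.reduceAdd, add_zero] at *; omega
    norm_num at this
  by_cases h₄ : u (b + 5) = u (b + 6)
  · exact Or.inr ⟨h₂, h₃, h₄⟩
  obtain ⟨e, he₁, he₂, he⟩ := exists_eq_succ_of_le_add_three hu (b + 2)
  obtain rfl | rfl | rfl | rfl : e = b + 2 ∨ e = b + 3 ∨ e = b + 4 ∨ e = b + 5 := by omega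
  all_goals simp only [add_assoc, Nat.reduceAdd] at *; contradiction

lemma even_of_eq_succ_of_eq_succ_add {c n : ℕ} (hc : 1 ≤ c) (h : u c = u (c + 1))
    (h' : u (c + n) = u (c + n + 1)) : Even n := by
  induction n using Nat.strong_induction_on generalizing c with
  | _ n ih =>
  obtain _ | _ | n := n
  · exact Even.zero
  · exact (not_cube hu h h').elim
  rcases eq_succ_add_two_or_add_four hu hc h with h₂ | ⟨h₂, h₃, h₄⟩
  · have := ih n (by omega) (c := c + 2) (by omega) h₂ (by rwa [add_right_comm c 2 n])
    exact this.add even_two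
  obtain _ | _ | n := n
  · exact absurd h' h₂
  · exact absurd h' h₃
  · have := ih n (by omega) (c := c + 4) (by omega) h₄ (by rwa [add_right_comm c 4 n])
    exact this.add (by decide : Even 4)

lemma exists_powerFree_isFactor_thueMorseMorphism :
    ∃ v : ℕ → Fin 2, PowerFree (7 / 3) v ∧
      ∀ z, IsFactor z v → IsFactor (thueMorseMorphism z) u := by
  obtain ⟨e, he₁, -, he⟩ := exists_eq_succ_of_le_add_three hu 1
  -- `j ∈ {1, 2}` has the parity opposite to `e`, so no `aa` or `bb` starts at any `j + 2 * n`.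
  set j := e % 2 + 1
  have hblock : ∀ n, u (j + 2 * n + 1) = 1 - u (j + 2 * n) := fun n => by
    have hne : u (j + 2 * n) ≠ u (j + 2 * n + 1) := fun h => by
      rcases le_total e (j + 2 * n) with hle | hle
      · obtain ⟨d, hd⟩ := Nat.exists_eq_add_of_le hle
        have := even_of_eq_succ_of_eq_succ_add hu he₁ he (hd ▸ h)
        grind
      · obtain ⟨d, hd⟩ := Nat.exists_eq_add_of_le hle
        have := even_of_eq_succ_of_eq_succ_add hu (by omega) h (hd ▸ he)
        grind
    omega
  have hfactor : ∀ z, IsFactor z (fun n => u (j + 2 * n)) →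
      IsFactor (thueMorseMorphism z) u := by
    rintro z ⟨m, hm⟩
    refine ⟨j + 2 * m, ?_⟩
    rw [length_thueMorseMorphism, factorAt_eq_thueMorseMorphism hblock, ← hm]
  exact ⟨_, hu.of_isFactor_thueMorseMorphism hfactor, hfactor⟩

end SevenThirdsPowerFree

lemma isFactor_iterate_thueMorseMorphism (n : ℕ) {u : ℕ → Fin 2} (hu : PowerFree (7 / 3) u)
    (a : Fin 2) : IsFactor (thueMorseMorphism^[n] [a]) u := by
  induction n generalizing u with
  | zero => exact hu.isFactor_singleton a
  | succ n ih =>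
    obtain ⟨v, hv, hfactor⟩ := exists_powerFree_isFactor_thueMorseMorphism hu
    rw [Function.iterate_succ_apply']
    exact hfactor _ (ih hv)

section ThueMorse

lemma thueMorse_two_mul (n : ℕ) : thueMorse (2 * n) = thueMorse n := by
  rcases Nat.eq_zero_or_pos n with rfl | hn
  · rfl
  · simp [thueMorse, Nat.digits_def' one_lt_two (by omega : 0 < 2 * n)]

lemma thueMorse_two_mul_add_one (n : ℕ) : thueMorse (2 * n + 1) = 1 - thueMorse n := by
  simp only [thueMorse, Nat.digits_def' one_lt_two (by omega : 0 < 2 * n + 1),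
    show (2 * n + 1) % 2 = 1 by omega, show (2 * n + 1) / 2 = n by omega, List.count_cons_self]
  ext
  simp only [Fin.val_ofNat, Fin.sub_def, Fin.val_one]
  omega

lemma factorAt_thueMorse_zero_two_pow (n : ℕ) :
    factorAt thueMorse 0 (2 ^ n) = thueMorseMorphism^[n] [0] := by
  induction n with
  | zero => rfl
  | succ n ih =>
    have := factorAt_eq_thueMorseMorphism (u := thueMorse) (j := 0)
      (fun n => by rw [zero_add, thueMorse_two_mul_add_one, thueMorse_two_mul]) 0 (2 ^ n)
    simp only [zero_add, mul_zero, thueMorse_two_mul] at this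
    rw [pow_succ', this, ih, Function.iterate_succ_apply']

end ThueMorse

lemma PowerFree.isFactor_of_isFactor_thueMorse {u : ℕ → Fin 2} (hu : PowerFree (7 / 3) u)
    {v : List (Fin 2)} (hv : IsFactor v thueMorse) : IsFactor v u := by
  obtain ⟨i, hi⟩ := hv
  have hprefix : IsFactor (factorAt thueMorse 0 (2 ^ (i + v.length))) u := by
    rw [factorAt_thueMorse_zero_two_pow]
    exact isFactor_iterate_thueMorseMorphism _ hu 0
  rw [hi, ← zero_add i]
  exact isFactor_factorAt_of_isFactor u hprefix Nat.lt_two_pow_self.le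

/-- Every (7/3)-power-free infinite binary word contains every factor of the
Thue–Morse word; in particular, so does every overlap-free infinite binary word. -/
theorem every_73_free_contains_TM_factors :
    (∀ u : ℕ → Fin 2, PowerFree (7 / 3) u →
      ∀ v : List (Fin 2), IsFactor v thueMorse → IsFactor v u) ∧
    (∀ u : ℕ → Fin 2, OverlapFree u →
      ∀ v : List (Fin 2), IsFactor v thueMorse → IsFactor v u) :=
  ⟨fun _ hu _ => hu.isFactor_of_isFactor_thueMorse,
    fun _ hu _ => (hu.powerFree (by norm_num)).isFactor_of_isFactor_thueMorse⟩
end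

section
/- The Thue–Morse word t has minimum subword complexity among all (7/3)-power-free infinite binary words: t itself is overlap-free (hence (7/3)-power-free), and for every (7/3)-power-free infinite binary word u and every n ≥ 0, p_t(n) ≤ p_u(n). -/
/-!
The Thue–Morse word `t` is the fixed point of `μ`. In `μ(v)` the letters at positions `2m` and
`2m + 1` differ, so an overlap of odd period would force the word to alternate all along it,
which is impossible; an overlap of even period `2q` halves to an overlap of period `q` in `v`.
Descent on the period shows that `t` is overlap-free.

Conversely, in a `(7/3)`-power-free binary word `u` every window of length 5 contains a repeated
letter `aa`, and any two repeats at positions `≥ 1` are an even distance apart (an odd gap would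
create a factor `baabaab` of exponent `7/3`). Cutting `u` at a position of the other parity splits
it into blocks `ab` with `a ≠ b`, so `u` is, after a shift, `μ(v)` with `v` again
`(7/3)`-power-free. Iterating, `u` contains `μ^k(a)` for every `k`, and these blocks contain every
factor of `t`.
-/

open Fin.NatCast

-- The window `u[i, i + L)` has period `q`; unlike `HasPer`, no bounds on `q` are imposed.
def HasPerAt {α : Type*} (u : ℕ → α) (i L q : ℕ) : Prop :=
  ∀ r, r + q < L → u (i + r) = u (i + r + q)

theorem HasPerAt.mono {α : Type*} {u : ℕ → α} {i L L' q : ℕ} (h : HasPerAt u i L q)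
    (hL : L' ≤ L) : HasPerAt u i L' q :=
  fun r hr => h r (by omega)

theorem factorAt_length {k : ℕ} (u : ℕ → Fin k) (i m : ℕ) : (factorAt u i m).length = m := by
  simp [factorAt]

theorem hasPer_factorAt_iff {k : ℕ} {u : ℕ → Fin k} {i L q : ℕ} :
    HasPer (factorAt u i L) q ↔ 1 ≤ q ∧ q ≤ L ∧ HasPerAt u i L q := by
  simp only [HasPer, HasPerAt, factorAt_length]
  refine and_congr_right fun _ => and_congr_right fun _ => forall_congr' fun r => ?_
  refine imp_congr_right fun hr => ?_
  simp [factorAt, hr, show r < L by omega, add_assoc]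

theorem minPer_mem {α : Type*} {w : List α} (h : w ≠ []) : HasPer w (minPer w) :=
  Nat.sInf_mem (s := {q | HasPer w q})
    ⟨w.length, List.length_pos_iff.mpr h, le_rfl, fun _ hi => by omega⟩

theorem exists_hasPerAt_of_isFactor {k : ℕ} {u : ℕ → Fin k} {v : List (Fin k)}
    (hv : IsFactor v u) (hne : v ≠ []) :
    ∃ i q, 1 ≤ q ∧ q ≤ v.length ∧ HasPerAt u i v.length q ∧ exponent v = v.length / q := by
  obtain ⟨i, hi⟩ := hv
  have hper : HasPer (factorAt u i v.length) (minPer v) := by rw [← hi]; exact minPer_mem hne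
  rw [hasPer_factorAt_iff] at hper
  exact ⟨i, minPer v, hper.1, hper.2.1, hper.2.2, rfl⟩

theorem PowerFree.div_lt_of_hasPerAt {k : ℕ} {α : ℝ} {u : ℕ → Fin k} (hu : PowerFree α u) {i L q : ℕ}
    (hq : 1 ≤ q) (hqL : q ≤ L) (h : HasPerAt u i L q) : (L / q : ℝ) < α := by
  have hper : HasPer (factorAt u i L) q := hasPer_factorAt_iff.mpr ⟨hq, hqL, h⟩
  have hne : factorAt u i L ≠ [] := by
    rw [← List.length_pos_iff, factorAt_length]; omega
  have hmin : 0 < minPer (factorAt u i L) := (minPer_mem hne).1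
  calc (L / q : ℝ) ≤ L / minPer (factorAt u i L) := by
        gcongr; exact Nat.sInf_le hper
    _ = exponent (factorAt u i L) := by rw [exponent, factorAt_length]
    _ < α := hu _ hne ⟨i, by rw [factorAt_length]⟩

theorem PowerFree.three_mul_lt_seven_mul {u : ℕ → Fin 2} (hu : PowerFree (7 / 3) u) {i L q : ℕ}
    (hq : 1 ≤ q) (hqL : q ≤ L) (h : HasPerAt u i L q) : 3 * L < 7 * q := by
  have := hu.div_lt_of_hasPerAt hq hqL h
  rw [div_lt_div_iff₀ (by exact_mod_cast hq) (by norm_num)] at this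
  exact_mod_cast (by linarith : (3 * L : ℝ) < 7 * q)

theorem powerFree_of_hasPerAt {k : ℕ} {α : ℝ} {u : ℕ → Fin k}
    (h : ∀ i L q, 1 ≤ q → q ≤ L → HasPerAt u i L q → (L / q : ℝ) < α) : PowerFree α u := by
  intro v hne hv
  obtain ⟨i, q, hq, hqL, hper, hexp⟩ := exists_hasPerAt_of_isFactor hv hne
  exact hexp ▸ h i _ q hq hqL hper

theorem overlapFree_of_hasPerAt {k : ℕ} {u : ℕ → Fin k}
    (h : ∀ i q, 1 ≤ q → ¬ HasPerAt u i (2 * q + 1) q) : OverlapFree u := by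
  intro v hne hv
  obtain ⟨i, q, hq, -, hper, hexp⟩ := exists_hasPerAt_of_isFactor hv hne
  have hlen : v.length ≤ 2 * q := by
    by_contra hlt
    exact h i q hq (hper.mono (by omega))
  rw [hexp, div_le_iff₀ (by exact_mod_cast hq)]
  exact_mod_cast hlen

theorem PowerFree.shift {k : ℕ} {α : ℝ} {u : ℕ → Fin k} (hu : PowerFree α u) (c : ℕ) :
    PowerFree α fun r => u (c + r) := by
  rintro v hne ⟨i, hi⟩
  exact hu v hne ⟨c + i, by simpa [factorAt, add_assoc] using hi⟩

/-- `μ` on infinite words: letter `n` of `mu v` is `v (n / 2)`, flipped when `n` is odd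
(the cast `(n : Fin 2)` is `n mod 2`). -/
def mu (v : ℕ → Fin 2) : ℕ → Fin 2 := fun n => v (n / 2) + (n : Fin 2)

theorem natCast_fin_two_two_mul_add (m b : ℕ) : ((2 * m + b : ℕ) : Fin 2) = (b : Fin 2) := by
  ext
  simp [Fin.val_add]

theorem mu_two_mul_add (v : ℕ → Fin 2) {m b : ℕ} (hb : b < 2) :
    mu v (2 * m + b) = v m + (b : Fin 2) := by
  rw [mu, natCast_fin_two_two_mul_add]
  congr 2
  omega

theorem mu_succ_of_even (v : ℕ → Fin 2) {n : ℕ} (hn : Even n) : mu v (n + 1) = mu v n + 1 := by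
  obtain ⟨m, rfl⟩ := hn
  rw [← two_mul, mu_two_mul_add v (b := 1) (by norm_num),
    show 2 * m = 2 * m + 0 from rfl, mu_two_mul_add v (by norm_num)]
  simp

theorem thueMorse_eq_thueMorse_div_two_add (n : ℕ) : thueMorse n = thueMorse (n / 2) + (n : Fin 2) := by
  rcases Nat.eq_zero_or_pos n with rfl | hn
  · simp
  rw [thueMorse, thueMorse, Nat.digits_def' (by norm_num) hn, List.count_cons]
  ext
  simp [Fin.val_add]
  split_ifs <;> omega

theorem mu_thueMorse : mu thueMorse = thueMorse :=
  funext fun n => (thueMorse_eq_thueMorse_div_two_add n).symm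

theorem mu_iterate_apply (v : ℕ → Fin 2) (k n : ℕ) :
    mu^[k] v n = v (n / 2 ^ k) + thueMorse (n % 2 ^ k) := by
  induction k generalizing n with
  | zero => rw [pow_zero, Nat.div_one, Nat.mod_one]; exact (add_zero _).symm
  | succ k ih =>
    rw [Function.iterate_succ_apply', mu, ih, thueMorse_eq_thueMorse_div_two_add (n % 2 ^ (k + 1)), pow_succ',
      Nat.div_div_eq_div_mul, Nat.mod_mul_right_div_self, add_assoc]
    congr 2
    ext
    simp

theorem thueMorse_two_pow_add {k x : ℕ} (hx : x < 2 ^ k) :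
    thueMorse (2 ^ k + x) = thueMorse x + 1 := by
  have h := mu_iterate_apply thueMorse k (2 ^ k + x)
  rw [Function.iterate_fixed mu_thueMorse] at h
  rw [h, Nat.add_div_left _ (by positivity), Nat.div_eq_of_lt hx, Nat.add_mod_left,
    Nat.mod_eq_of_lt hx, add_comm, show thueMorse 1 = 1 from rfl]

theorem HasPerAt.of_mu {v : ℕ → Fin 2} {i q : ℕ}
    (h : HasPerAt (mu v) i (2 * (2 * q) + 1) (2 * q)) : HasPerAt v (i / 2) (2 * q + 1) q := by
  intro r hr
  have hi := h (2 * r) (by omega)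
  rwa [show i + 2 * r = 2 * (i / 2 + r) + i % 2 by omega,
    show 2 * (i / 2 + r) + i % 2 + 2 * q = 2 * (i / 2 + r + q) + i % 2 by omega,
    mu_two_mul_add v (i.mod_lt two_pos), mu_two_mul_add v (i.mod_lt two_pos),
    add_left_inj] at hi

theorem mu_not_hasPerAt_of_odd (v : ℕ → Fin 2) (i : ℕ) {q : ℕ} (hq : Odd q) :
    ¬ HasPerAt (mu v) i (2 * q + 1) q := by
  intro h
  have step : ∀ r < q, mu v (i + r + 1) = mu v (i + r) + 1 := by
    intro r hr
    rcases Nat.even_or_odd (i + r) with hir | hir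
    · exact mu_succ_of_even v hir
    · -- `i + r + q` is even, so `μ` flips the letter there, and the period carries this back.
      rw [h r (by omega), show i + r + 1 = i + (r + 1) by omega, h (r + 1) (by omega),
        show i + (r + 1) + q = i + r + q + 1 by omega]
      exact mu_succ_of_even v (hir.add_odd hq)
  have alternating : ∀ d ≤ q, mu v (i + d) = mu v i + (d : Fin 2) := by
    intro d hd
    induction d with
    | zero => ext; simp
    | succ d ih =>
      rw [← add_assoc, step d (by omega), ih (by omega), add_assoc]
      congr 1
      ext
      simp [Fin.val_add]
  have hflip := alternating q le_rfl
  have hper : mu v i = mu v (i + q) := h 0 (by omega)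
  obtain ⟨m, rfl⟩ := hq
  rw [← hper, natCast_fin_two_two_mul_add] at hflip
  exact absurd hflip (by simp)

theorem thueMorse_not_hasPerAt (i : ℕ) {q : ℕ} (hq : 1 ≤ q) :
    ¬ HasPerAt thueMorse i (2 * q + 1) q := by
  induction q using Nat.strong_induction_on generalizing i with
  | _ q ih =>
  rw [← mu_thueMorse]
  obtain ⟨q, rfl | rfl⟩ := Nat.even_or_odd' q
  · exact fun h => ih q (by omega) (i / 2) (by omega) h.of_mu
  · exact mu_not_hasPerAt_of_odd _ i (odd_two_mul_add_one q)

theorem thueMorse_overlapFree : OverlapFree thueMorse :=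
  overlapFree_of_hasPerAt fun i _ hq => thueMorse_not_hasPerAt i hq

theorem mu_iterate_shift (v : ℕ → Fin 2) (k c r : ℕ) :
    mu^[k] v (2 ^ k * c + r) = mu^[k] (fun s => v (c + s)) r := by
  rw [mu_iterate_apply, mu_iterate_apply, Nat.mul_add_div (by positivity), Nat.mul_add_mod]

-- With `2 ^ K > i + n`, the prefix of length `2 ^ (K + 1)` of `μ^(K+1)(v)` is `t` or its
-- complement, and then `t[0, 2 ^ K)` starts at `0` or at `2 ^ K` respectively.
theorem exists_mu_iterate_eq_thueMorse (i n : ℕ) :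
    ∃ k, ∀ v : ℕ → Fin 2, ∃ j, ∀ r < n, mu^[k] v (j + r) = thueMorse (i + r) := by
  refine ⟨i + n + 1, fun v => ?_⟩
  have hk : i + n < 2 ^ (i + n) := Nat.lt_two_pow_self
  have hk' : 2 ^ (i + n + 1) = 2 * 2 ^ (i + n) := pow_succ' 2 _
  obtain h0 | h1 : v 0 = 0 ∨ v 0 = 1 := by omega
  · refine ⟨i, fun r hr => ?_⟩
    rw [mu_iterate_apply, Nat.div_eq_of_lt (by omega), Nat.mod_eq_of_lt (by omega), h0, zero_add]
  · refine ⟨2 ^ (i + n) + i, fun r hr => ?_⟩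
    rw [mu_iterate_apply, Nat.div_eq_of_lt (by omega), Nat.mod_eq_of_lt (by omega), h1,
      add_assoc, thueMorse_two_pow_add (by omega)]
    omega

theorem HasPerAt.mu {v : ℕ → Fin 2} {i n q : ℕ} (h : HasPerAt v i n q) :
    HasPerAt (mu v) (2 * i) (2 * n) (2 * q) := by
  intro s hs
  rw [show 2 * i + s = 2 * (i + s / 2) + s % 2 by omega,
    show 2 * (i + s / 2) + s % 2 + 2 * q = 2 * (i + s / 2 + q) + s % 2 by omega,
    mu_two_mul_add v (s.mod_lt two_pos), mu_two_mul_add v (s.mod_lt two_pos), h _ (by omega)]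

theorem PowerFree.of_mu {α : ℝ} {v : ℕ → Fin 2} (hv : PowerFree α (mu v)) : PowerFree α v :=
  powerFree_of_hasPerAt fun i L q hq hqL h => by
    have := hv.div_lt_of_hasPerAt (by omega) (by omega) h.mu
    push_cast at this
    rwa [mul_div_mul_left _ _ two_ne_zero] at this

def RepeatsAt {α : Type*} (u : ℕ → α) (p : ℕ) : Prop := u (p + 1) = u p

theorem eq_mu_of_not_repeatsAt {u : ℕ → Fin 2} {c : ℕ} (h : ∀ j, ¬ RepeatsAt u (c + 2 * j)) :
    (fun r => u (c + r)) = mu fun j => u (c + 2 * j) := by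
  funext r
  obtain ⟨j, rfl | rfl⟩ := Nat.even_or_odd' r
  · rw [← add_zero (2 * j), mu_two_mul_add _ two_pos]
    simp
  · rw [mu_two_mul_add _ one_lt_two, ← add_assoc]
    have hj : u (c + 2 * j + 1) ≠ u (c + 2 * j) := h j
    change _ = _ + 1
    omega

namespace PowerFree

variable {u : ℕ → Fin 2}

theorem not_repeatsAt_succ (hu : PowerFree (7 / 3) u) {p : ℕ} (hp : RepeatsAt u p) :
    ¬ RepeatsAt u (p + 1) := by
  intro hp'
  have : HasPerAt u p 3 1 := by
    intro r hr
    obtain rfl | rfl : r = 0 ∨ r = 1 := by omega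
    · exact hp.symm
    · exact hp'.symm
  have := hu.three_mul_lt_seven_mul le_rfl (by norm_num) this
  omega

theorem exists_repeatsAt (hu : PowerFree (7 / 3) u) (i : ℕ) :
    ∃ p, i ≤ p ∧ p ≤ i + 3 ∧ RepeatsAt u p := by
  by_contra! h
  have : HasPerAt u i 5 2 := by
    intro r hr
    have h1 : u (i + r + 1) ≠ u (i + r) := h (i + r) (by omega) (by omega)
    have h2 : u (i + r + 2) ≠ u (i + r + 1) := h (i + r + 1) (by omega) (by omega)
    omega
  have := hu.three_mul_lt_seven_mul (by norm_num) (by norm_num) this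
  omega

theorem even_sub_of_repeatsAt_of_forall_not_repeatsAt (hu : PowerFree (7 / 3) u) {p q : ℕ}
    (hp1 : 1 ≤ p) (hpq : p < q) (hp : RepeatsAt u p) (hq : RepeatsAt u q)
    (hbetween : ∀ r, p < r → r < q → ¬ RepeatsAt u r) : Even (q - p) := by
  obtain ⟨r, hr1, hr2, hr⟩ := hu.exists_repeatsAt (p + 1)
  have hqr : q ≤ r := by
    by_contra! hrq
    exact hbetween r (by omega) hrq hr
  have hq1 : q ≠ p + 1 := by
    rintro rfl
    exact hu.not_repeatsAt_succ hp hq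
  have hq3 : q ≠ p + 3 := by
    rintro rfl
    -- `u[p - 1, p + 6)` is `baabaab`, of period 3 and exponent `7/3`.
    obtain ⟨s, rfl⟩ : ∃ s, p = s + 1 := ⟨p - 1, by omega⟩
    have h0 : u (s + 1) ≠ u s := fun h => hu.not_repeatsAt_succ h hp
    have h1 : u (s + 2) = u (s + 1) := hp
    have h2 : u (s + 3) ≠ u (s + 2) := hbetween (s + 2) (by omega) (by omega)
    have h3 : u (s + 4) ≠ u (s + 3) := hbetween (s + 3) (by omega) (by omega)
    have h4 : u (s + 5) = u (s + 4) := hq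
    have h5 : u (s + 6) ≠ u (s + 5) := hu.not_repeatsAt_succ hq
    have : HasPerAt u s 7 3 := by
      intro r hr
      have : r < 4 := by omega
      interval_cases r <;> simp only [add_zero, add_assoc, Nat.reduceAdd] <;> omega
    have := hu.three_mul_lt_seven_mul (by norm_num) (by norm_num) this
    omega
  exact Nat.even_iff.mpr (by omega)

theorem even_sub_of_repeatsAt (hu : PowerFree (7 / 3) u) {p q : ℕ} (hp1 : 1 ≤ p) (hpq : p ≤ q)
    (hp : RepeatsAt u p) (hq : RepeatsAt u q) : Even (q - p) := by
  induction hd : q - p using Nat.strong_induction_on generalizing p q with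
  | _ d ih =>
  subst hd
  rcases hpq.eq_or_lt with rfl | hlt
  · simp
  by_cases hmid : ∃ r, p < r ∧ r < q ∧ RepeatsAt u r
  · obtain ⟨r, hpr, hrq, hr⟩ := hmid
    have hpr' := ih (r - p) (by omega) hp1 hpr.le hp hr rfl
    have hrq' := ih (q - r) (by omega) (by omega) hrq.le hr hq rfl
    rw [show q - p = (q - r) + (r - p) by omega]
    exact hrq'.add hpr'
  · exact hu.even_sub_of_repeatsAt_of_forall_not_repeatsAt hp1 hlt hp hq
      fun r hpr hrq hr => hmid ⟨r, hpr, hrq, hr⟩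

theorem exists_eq_mu (hu : PowerFree (7 / 3) u) :
    ∃ c v, PowerFree (7 / 3) v ∧ (fun r => u (c + r)) = mu v := by
  obtain ⟨p, hp1, -, hp⟩ := hu.exists_repeatsAt 1
  -- All repeats at positions `≥ 1` have the parity of `p`.
  have hc : ∀ j, ¬ RepeatsAt u (p % 2 + 1 + 2 * j) := by
    intro j hj
    rcases le_total p (p % 2 + 1 + 2 * j) with hle | hle
    · have := Nat.even_iff.mp (hu.even_sub_of_repeatsAt hp1 hle hp hj)
      omega
    · have := Nat.even_iff.mp (hu.even_sub_of_repeatsAt (by omega) hle hj hp)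
      omega
  have heq := eq_mu_of_not_repeatsAt hc
  exact ⟨_, _, (heq ▸ hu.shift _).of_mu, heq⟩

theorem exists_eq_mu_iterate (hu : PowerFree (7 / 3) u) (k : ℕ) :
    ∃ c v, PowerFree (7 / 3) v ∧ ∀ r, u (c + r) = mu^[k] v r := by
  induction k with
  | zero => exact ⟨0, u, hu, fun r => by simp⟩
  | succ k ih =>
    obtain ⟨c, v, hv, hcv⟩ := ih
    obtain ⟨c', v', hv', hcv'⟩ := hv.exists_eq_mu
    refine ⟨c + 2 ^ k * c', v', hv', fun r => ?_⟩
    rw [add_assoc, hcv, mu_iterate_shift, hcv', Function.iterate_succ_apply]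

theorem isFactor_of_isFactor_thueMorse_s1 (hu : PowerFree (7 / 3) u) {w : List (Fin 2)}
    (hw : IsFactor w thueMorse) : IsFactor w u := by
  obtain ⟨i, hi⟩ := hw
  obtain ⟨k, hk⟩ := exists_mu_iterate_eq_thueMorse i w.length
  obtain ⟨c, v, -, hcv⟩ := hu.exists_eq_mu_iterate k
  obtain ⟨j, hj⟩ := hk v
  refine ⟨c + j, hi.trans (List.map_congr_left fun r hr => ?_)⟩
  rw [List.mem_range] at hr
  rw [add_assoc, hcv, hj r hr]

end PowerFree

/-- The Thue–Morse word is overlap-free (hence (7/3)-power-free) and has minimum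
subword complexity among all (7/3)-power-free infinite binary words. -/
theorem thueMorse_min_complexity :
    OverlapFree thueMorse ∧
    ∀ u : ℕ → Fin 2, PowerFree (7 / 3) u →
      ∀ n, complexity thueMorse n ≤ complexity u n := by
  refine ⟨thueMorse_overlapFree, fun u hu n => Set.ncard_le_ncard ?_ ?_⟩
  · rintro w ⟨hlen, hw⟩
    exact ⟨hlen, hu.isFactor_of_isFactor_thueMorse_s1 hw⟩
  · exact (List.finite_length_eq (Fin 2) n).subset fun w hw => hw.1
end
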